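/- Let P₀, P_b, s₀, s_b, t₀, t_b be positive reals with t₀ > t_b (interpret: P_x = prior probability of bid vector x, s_x = P(reach stage 2 | x), t_x = P(signal θ | x)). Define r₀ = (P₀ s₀ t₀)/(P₀ s₀ t₀ + P_b s_b t_b) ÷ (P₀ s₀)/(P₀ s₀ + P_b s_b) and r_b analogously with subscript b. Then r₀ > r_b; in particular, it is impossible that both r₀ = 1 and r_b = 1. -/

import Mathlib

/-! The common factor `P₀ s₀` (resp. `P_b s_b`) cancels from each ratio, leaving
`r₀ = t₀ · S / D` and `r_b = t_b · S / D` with the same positive factor `S / D`, where `S` and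
`D` are the normalising constants of prior and posterior; so `r₀ > r_b` is just `t₀ > t_b`. -/

theorem div_div_div_cancel_left_mul (a t D S : ℝ) (ha : a ≠ 0) :
    a * t / D / (a / S) = t * (S / D) := by
  rw [div_div_eq_mul_div, div_mul_eq_mul_div, div_div, mul_comm D a, mul_assoc,
    mul_div_mul_left _ _ ha, mul_div_assoc]

theorem signal_changes_posterior_general
    (P₀ Pb s₀ sb t₀ tb : ℝ)
    (hP₀ : 0 < P₀) (hPb : 0 < Pb) (hs₀ : 0 < s₀) (hsb : 0 < sb)
    (htb : 0 < tb) (ht : tb < t₀) :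
    (P₀ * s₀ * t₀ / (P₀ * s₀ * t₀ + Pb * sb * tb)) / (P₀ * s₀ / (P₀ * s₀ + Pb * sb)) >
      (Pb * sb * tb / (P₀ * s₀ * t₀ + Pb * sb * tb)) / (Pb * sb / (P₀ * s₀ + Pb * sb)) ∧
    ¬ ((P₀ * s₀ * t₀ / (P₀ * s₀ * t₀ + Pb * sb * tb)) / (P₀ * s₀ / (P₀ * s₀ + Pb * sb)) = 1 ∧
       (Pb * sb * tb / (P₀ * s₀ * t₀ + Pb * sb * tb)) / (Pb * sb / (P₀ * s₀ + Pb * sb)) = 1) := by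
  have ht₀ : 0 < t₀ := htb.trans ht
  have hSD : 0 < (P₀ * s₀ + Pb * sb) / (P₀ * s₀ * t₀ + Pb * sb * tb) := by positivity
  rw [div_div_div_cancel_left_mul _ _ _ _ (by positivity : P₀ * s₀ ≠ 0),
    div_div_div_cancel_left_mul _ _ _ _ (by positivity : Pb * sb ≠ 0)]
  have hlt := mul_lt_mul_of_pos_right ht hSD
  exact ⟨hlt, fun h => hlt.ne' (h.1.trans h.2.symm)⟩

/-- core computation of Lemma 1: with P₀, P_b, s₀, s_b, t₀, t_b > 0
and t₀ > t_b, the ratio r₀ of the posterior to the prior probability of the bid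
vector 0 (after observing the signal θ) strictly exceeds the corresponding ratio
r_b; in particular r₀ and r_b cannot both equal 1. -/
theorem signal_changes_posterior
    (P₀ Pb s₀ sb t₀ tb : ℝ)
    (hP₀ : 0 < P₀) (hPb : 0 < Pb) (hs₀ : 0 < s₀) (hsb : 0 < sb)
    (ht₀ : 0 < t₀) (htb : 0 < tb) (ht : tb < t₀) :
    (P₀ * s₀ * t₀ / (P₀ * s₀ * t₀ + Pb * sb * tb)) / (P₀ * s₀ / (P₀ * s₀ + Pb * sb)) >
      (Pb * sb * tb / (P₀ * s₀ * t₀ + Pb * sb * tb)) / (Pb * sb / (P₀ * s₀ + Pb * sb)) ∧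
    ¬ ((P₀ * s₀ * t₀ / (P₀ * s₀ * t₀ + Pb * sb * tb)) / (P₀ * s₀ / (P₀ * s₀ + Pb * sb)) = 1 ∧
       (Pb * sb * tb / (P₀ * s₀ * t₀ + Pb * sb * tb)) / (Pb * sb / (P₀ * s₀ + Pb * sb)) = 1) :=
  signal_changes_posterior_general P₀ Pb s₀ sb t₀ tb hP₀ hPb hs₀ hsb htb ht
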